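/- Let H be a Hopf algebra over k with antipode S and σ: H → k a character. The twisted antipode S^σ defined by S^σ(h) = σ(h₍₁₎) S(h₍₂₎) is a coupling map between H₁ = (H, m, 1, Δ, ε, S) and H₂ = (H, m, 1, Δ₂, ε₂, S₂): that is, m ∘ (S^σ ⊗ id) ∘ Δ = 1·ε₂ and m ∘ (id ⊗ S^σ) ∘ Δ₂ = 1·ε, and moreover the coproducts Δ and Δ₂ commute, i.e. (Δ ⊗ id)∘Δ₂ = (id ⊗ Δ₂)∘Δ and (Δ₂ ⊗ id)∘Δ = (id ⊗ Δ)∘Δ₂. -/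
import Mathlib


open TensorProduct LinearMap

noncomputable section

variable {k H : Type*} [CommRing k] [Ring H] [HopfAlgebra k H]

/-- The map `H ⊗ H →ₗ H`, `a ⊗ b ↦ σ(a) • b`. -/
def sigmaSmul (σ : H →ₐ[k] k) : H ⊗[k] H →ₗ[k] H :=
  TensorProduct.lift ((LinearMap.lsmul k H).comp σ.toLinearMap)

/-- The twisted coproduct `Δ₂(h) = h₍₁₎ ⊗ σ(S(h₍₂₎)) h₍₃₎`. -/
def twistedComul (σ : H →ₐ[k] k) : H →ₗ[k] H ⊗[k] H :=
  (LinearMap.lTensor H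
      ((sigmaSmul σ) ∘ₗ LinearMap.rTensor H (HopfAlgebra.antipode (R := k)))) ∘ₗ
    (LinearMap.lTensor H (Coalgebra.comul (R := k))) ∘ₗ Coalgebra.comul (R := k)

/-- The Connes–Moscovici twisted antipode `S^σ(h) = σ(h₍₁₎) S(h₍₂₎)`. -/
def twistedCoupling (σ : H →ₐ[k] k) : H →ₗ[k] H :=
  (sigmaSmul σ) ∘ₗ LinearMap.lTensor H (HopfAlgebra.antipode (R := k)) ∘ₗ
    Coalgebra.comul (R := k)

namespace CMaux

open Coalgebra HopfAlgebra

def sm (σ : H →ₐ[k] k) (M : Type*) [AddCommMonoid M] [Module k M] : H ⊗[k] M →ₗ[k] M :=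
  TensorProduct.lift ((LinearMap.lsmul k M).comp σ.toLinearMap)

@[simp] lemma sm_tmul (σ : H →ₐ[k] k) (M : Type*) [AddCommMonoid M] [Module k M] (a : H)
    (m : M) : sm σ M (a ⊗ₜ[k] m) = σ a • m := rfl

variable (σ : H →ₐ[k] k)

lemma sigmaSmul_eq : sigmaSmul σ = sm σ H := rfl

lemma sm_nat {M N : Type*} [AddCommMonoid M] [AddCommMonoid N] [Module k M] [Module k N]
    (f : M →ₗ[k] N) : f ∘ₗ sm σ M = sm σ N ∘ₗ LinearMap.lTensor H f := by
  ext a m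
  simp

lemma commute_apply {A B M N : Type*} [AddCommMonoid A] [AddCommMonoid B] [AddCommMonoid M]
    [AddCommMonoid N] [Module k A] [Module k B] [Module k M] [Module k N]
    (f : A →ₗ[k] B) (g : M →ₗ[k] N) (x : A ⊗[k] M) :
    LinearMap.lTensor B g (LinearMap.rTensor M f x) =
      LinearMap.rTensor N f (LinearMap.lTensor A g x) := by
  rw [← LinearMap.comp_apply, ← LinearMap.comp_apply, LinearMap.lTensor_comp_rTensor,
    LinearMap.rTensor_comp_lTensor]

def gm : H →ₗ[k] H :=
  sm σ H ∘ₗ LinearMap.rTensor H (HopfAlgebra.antipode (R := k)) ∘ₗ Coalgebra.comul (R := k)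

lemma twistedComul_eq :
    twistedComul σ = LinearMap.lTensor H (gm σ) ∘ₗ Coalgebra.comul (R := k) := by
  rw [twistedComul, gm, sigmaSmul_eq]
  simp only [LinearMap.lTensor_comp, LinearMap.comp_assoc]

lemma twistedCoupling_eq :
    twistedCoupling σ = sm σ H ∘ₗ LinearMap.lTensor H (HopfAlgebra.antipode (R := k)) ∘ₗ
      Coalgebra.comul (R := k) := rfl

lemma lemE (f : H →ₗ[k] H) :
    (TensorProduct.assoc k H H H).toLinearMap ∘ₗ LinearMap.lTensor (H ⊗[k] H) f =
      LinearMap.lTensor H (LinearMap.lTensor H f) ∘ₗ (TensorProduct.assoc k H H H).toLinearMap := by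
  ext a b c
  simp

lemma lemE3 (f : H →ₗ[k] H) :
    (TensorProduct.assoc k H H H).toLinearMap ∘ₗ LinearMap.rTensor H (LinearMap.lTensor H f) =
      LinearMap.lTensor H (LinearMap.rTensor H f) ∘ₗ (TensorProduct.assoc k H H H).toLinearMap := by
  ext a b c
  simp

lemma lem5 :
    sm σ (H ⊗[k] H) ∘ₗ LinearMap.rTensor (H ⊗[k] H) (HopfAlgebra.antipode (R := k)) ∘ₗ
        (TensorProduct.assoc k H H H).toLinearMap =
      LinearMap.rTensor H (sm σ H ∘ₗ LinearMap.rTensor H (HopfAlgebra.antipode (R := k))) := by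
  ext a b c
  simp [TensorProduct.smul_tmul']

lemma lemF :
    LinearMap.mul' k H ∘ₗ LinearMap.rTensor H (sm σ H) ∘ₗ
        LinearMap.rTensor H (LinearMap.lTensor H (HopfAlgebra.antipode (R := k))) =
      sm σ H ∘ₗ
        LinearMap.lTensor H
          (LinearMap.mul' k H ∘ₗ LinearMap.rTensor H (HopfAlgebra.antipode (R := k))) ∘ₗ
        (TensorProduct.assoc k H H H).toLinearMap := by
  ext a b c
  simp [smul_mul_assoc]

lemma lemI :
    sm σ H ∘ₗ LinearMap.rTensor H (HopfAlgebra.antipode (R := k)) ∘ₗ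
        LinearMap.lTensor H (sm σ H) ∘ₗ
        LinearMap.lTensor H (LinearMap.lTensor H (HopfAlgebra.antipode (R := k))) ∘ₗ
        (TensorProduct.assoc k H H H).toLinearMap =
      sm σ H ∘ₗ
        LinearMap.rTensor H
          (LinearMap.mul' k H ∘ₗ LinearMap.rTensor H (HopfAlgebra.antipode (R := k))) ∘ₗ
        LinearMap.lTensor (H ⊗[k] H) (HopfAlgebra.antipode (R := k)) := by
  ext a b c
  simp [smul_smul, mul_comm]

lemma lemJ :
    sm σ H ∘ₗ LinearMap.rTensor H (Algebra.linearMap k H ∘ₗ Coalgebra.counit (R := k) (A := H)) =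
      (TensorProduct.lid k H).toLinearMap ∘ₗ LinearMap.rTensor H (Coalgebra.counit (R := k)) := by
  ext a b
  simp [Algebra.algebraMap_eq_smul_one, smul_smul]

/-- `Δ ∘ g = (g ⊗ id) ∘ Δ`. -/
lemma comul_comp_gm :
    (Coalgebra.comul (R := k) (A := H)) ∘ₗ gm σ =
      LinearMap.rTensor H (gm σ) ∘ₗ Coalgebra.comul (R := k) := by
  apply LinearMap.ext; intro h
  have e1 := LinearMap.congr_fun (sm_nat σ (Coalgebra.comul (R := k) (A := H)))
      (LinearMap.rTensor H (HopfAlgebra.antipode (R := k)) (Coalgebra.comul (R := k) h))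
  have e5 := LinearMap.congr_fun (lem5 σ)
      (LinearMap.rTensor H (Coalgebra.comul (R := k)) (Coalgebra.comul (R := k) h))
  simp only [LinearMap.comp_apply, LinearEquiv.coe_coe, LinearMap.rTensor_comp] at e1 e5
  simp only [gm, LinearMap.comp_apply, LinearMap.rTensor_comp]
  rw [e1, commute_apply, ← Coalgebra.coassoc_apply, e5]

/-- `S^σ ∘ g = S`. -/
lemma tc_comp_gm : twistedCoupling σ ∘ₗ gm σ = HopfAlgebra.antipode (R := k) := by
  apply LinearMap.ext; intro h
  have e1 := LinearMap.congr_fun (sm_nat σ (twistedCoupling σ))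
      (LinearMap.rTensor H (HopfAlgebra.antipode (R := k)) (Coalgebra.comul (R := k) h))
  have eI := LinearMap.congr_fun (lemI σ)
      (LinearMap.rTensor H (Coalgebra.comul (R := k)) (Coalgebra.comul (R := k) h))
  have eJ := LinearMap.congr_fun (lemJ σ)
      (LinearMap.lTensor H (HopfAlgebra.antipode (R := k)) (Coalgebra.comul (R := k) h))
  simp only [LinearMap.comp_apply, LinearEquiv.coe_coe] at e1 eI eJ
  simp only [gm, LinearMap.comp_apply]
  rw [e1, commute_apply]
  conv_lhs => rw [twistedCoupling_eq]
  simp only [LinearMap.lTensor_comp, LinearMap.comp_apply]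
  rw [← Coalgebra.coassoc_apply, eI, commute_apply,
    ← LinearMap.comp_apply
      (LinearMap.rTensor H (LinearMap.mul' k H ∘ₗ LinearMap.rTensor H (HopfAlgebra.antipode (R := k))))
      (LinearMap.rTensor H (Coalgebra.comul (R := k))),
    ← LinearMap.rTensor_comp, LinearMap.comp_assoc, HopfAlgebra.mul_antipode_rTensor_comul,
    eJ, ← commute_apply, Coalgebra.rTensor_counit_comul]
  simp

end CMaux

/-- The twisted antipode `S^σ(h) = σ(h₍₁₎) S(h₍₂₎)` is a coupling map between the Hopf
algebra structures `H₁ = (H, m, 1, Δ, ε, S)` and `H₂ = (H, m, 1, Δ₂, ε₂ = σ, S₂)`: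
`m ∘ (S^σ ⊗ id) ∘ Δ = η ∘ ε₂` and `m ∘ (id ⊗ S^σ) ∘ Δ₂ = η ∘ ε`, and the coproducts
`Δ` and `Δ₂` commute. -/
theorem stmt4 (σ : H →ₐ[k] k) :
    -- coupling conditions
    (LinearMap.mul' k H ∘ₗ LinearMap.rTensor H (twistedCoupling σ) ∘ₗ
        Coalgebra.comul (R := k) = (Algebra.linearMap k H) ∘ₗ σ.toLinearMap) ∧
    (LinearMap.mul' k H ∘ₗ LinearMap.lTensor H (twistedCoupling σ) ∘ₗ twistedComul σ =
      (Algebra.linearMap k H) ∘ₗ Coalgebra.counit (R := k)) ∧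
    -- the coproducts Δ and Δ₂ commute
    ((TensorProduct.assoc k H H H).toLinearMap ∘ₗ
        LinearMap.rTensor H (Coalgebra.comul (R := k)) ∘ₗ twistedComul σ =
      LinearMap.lTensor H (twistedComul σ) ∘ₗ Coalgebra.comul (R := k)) ∧
    ((TensorProduct.assoc k H H H).toLinearMap ∘ₗ
        LinearMap.rTensor H (twistedComul σ) ∘ₗ Coalgebra.comul (R := k) =
      LinearMap.lTensor H (Coalgebra.comul (R := k)) ∘ₗ twistedComul σ) := by
  open CMaux in
  refine ⟨?_, ?_, ?_, ?_⟩
  · -- claim 1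
    apply LinearMap.ext; intro h
    have eF := LinearMap.congr_fun (lemF σ)
        (LinearMap.rTensor H (Coalgebra.comul (R := k)) (Coalgebra.comul (R := k) h))
    simp only [LinearMap.comp_apply, LinearEquiv.coe_coe] at eF
    simp only [twistedCoupling_eq, LinearMap.rTensor_comp, LinearMap.comp_apply]
    rw [eF, Coalgebra.coassoc_apply,
      ← LinearMap.comp_apply
        (LinearMap.lTensor H (LinearMap.mul' k H ∘ₗ LinearMap.rTensor H (HopfAlgebra.antipode (R := k))))
        (LinearMap.lTensor H (Coalgebra.comul (R := k))),
      ← LinearMap.lTensor_comp, LinearMap.comp_assoc, HopfAlgebra.mul_antipode_rTensor_comul,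
      LinearMap.lTensor_comp, LinearMap.comp_apply, Coalgebra.lTensor_counit_comul]
    simp [Algebra.algebraMap_eq_smul_one]
  · -- claim 2
    apply LinearMap.ext; intro h
    simp only [twistedComul_eq, LinearMap.comp_apply]
    rw [← LinearMap.comp_apply (LinearMap.lTensor H (twistedCoupling σ))
        (LinearMap.lTensor H (gm σ)), ← LinearMap.lTensor_comp, tc_comp_gm]
    simp
  · -- claim 3
    apply LinearMap.ext; intro h
    have eE := LinearMap.congr_fun (lemE (gm σ))
        (LinearMap.rTensor H (Coalgebra.comul (R := k)) (Coalgebra.comul (R := k) h))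
    simp only [LinearMap.comp_apply, LinearEquiv.coe_coe] at eE
    simp only [twistedComul_eq, LinearMap.comp_apply, LinearMap.lTensor_comp,
      LinearEquiv.coe_coe]
    rw [← commute_apply, eE, Coalgebra.coassoc_apply]
  · -- claim 4
    apply LinearMap.ext; intro h
    have eE := LinearMap.congr_fun (lemE3 (gm σ))
        (LinearMap.rTensor H (Coalgebra.comul (R := k)) (Coalgebra.comul (R := k) h))
    simp only [LinearMap.comp_apply, LinearEquiv.coe_coe] at eE
    simp only [twistedComul_eq, LinearMap.rTensor_comp, LinearMap.lTensor_comp,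
      LinearMap.comp_apply, LinearEquiv.coe_coe]
    rw [eE, Coalgebra.coassoc_apply,
      ← LinearMap.comp_apply (LinearMap.lTensor H (LinearMap.rTensor H (gm σ)))
        (LinearMap.lTensor H (Coalgebra.comul (R := k))),
      ← LinearMap.lTensor_comp, ← comul_comp_gm, LinearMap.lTensor_comp, LinearMap.comp_apply]

end
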